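/- Fix r ≥ 1. Let I ⊂ ℝ be a closed bounded interval of length |I| ≥ 1, let f : I → ℝ be of class C^{r+1}, let τ ∈ (0,1) satisfy inf_{x∈I} max_{1≤l≤r} |f^{(l)}(x)| ≥ τ, and set A = sup_{x∈I} max_{1≤l≤r+1} |f^{(l)}(x)| < ∞. Then there is a constant C = C(r) > 0 depending only on r (not on f) such that for every η ∈ (0,1), meas({x ∈ I : |f(x)| ≤ η}) ≤ C·A·|I|·η^{1/r}/τ². -/

import Mathlib

/-!
If `g k ≥ c` on an interval, then `g (k - 1)` increases with slope at least `c`, so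
`|g (k - 1)| ≤ c t` only on a set of length at most `2 t`; the rest of the interval consists of
at most two subintervals on which `|g (k - 1)| ≥ c t`, and induction on `k` there gives
`meas {|g 0| ≤ c t ^ k} ≤ 6 ^ k t`.

For the theorem, cut `[a, b]` into about `2 A (b - a) / τ` pieces. Since `|f^(l+1)| ≤ A`, the
derivative `f^(l)` with `|f^(l)| ≥ τ` at the left end of a piece stays `≥ τ / 2` in absolute
value on the whole piece, and the estimate with `c = τ / 2`, `t = 2 η^(1/r) / τ` is summed over
the pieces.
-/

open Real MeasureTheory Set

theorem Set.OrdConnected.sep_mem_of_monotoneOn {s T : Set ℝ} (hs : s.OrdConnected)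
    {f : ℝ → ℝ} (hf : MonotoneOn f s) (hT : T.OrdConnected) :
    ({x ∈ s | f x ∈ T}).OrdConnected :=
  ⟨fun _ hx _ hy _ hz => ⟨hs.out hx.1 hy.1 hz,
    hT.out hx.2 hy.2 ⟨hf hx.1 (hs.out hx.1 hy.1 hz) hz.1, hf (hs.out hx.1 hy.1 hz) hy.1 hz.2⟩⟩⟩

theorem Set.OrdConnected.mul_sub_le_sub_of_le_hasDerivWithinAt {s : Set ℝ} (hs : s.OrdConnected)
    {g g' : ℝ → ℝ} {c : ℝ} (hg : ∀ x ∈ s, HasDerivWithinAt g (g' x) s x)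
    (hc : ∀ x ∈ s, c ≤ g' x) {x y : ℝ} (hx : x ∈ s) (hy : y ∈ s) (hxy : x ≤ y) :
    c * (y - x) ≤ g y - g x := by
  have hderiv : ∀ z ∈ interior s, HasDerivAt g (g' z) z := fun z hz =>
    (hg z (interior_subset hz)).hasDerivAt (mem_interior_iff_mem_nhds.1 hz)
  refine hs.convex.mul_sub_le_image_sub_of_le_deriv (fun z hz => (hg z hz).continuousWithinAt)
    (fun z hz => (hderiv z hz).differentiableAt.differentiableWithinAt) (fun z hz => ?_)
    x hx y hy hxy
  rw [(hderiv z hz).deriv]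
  exact hc z (interior_subset hz)

theorem Set.OrdConnected.volume_sublevel_le_of_le_deriv {s : Set ℝ} (hs : s.OrdConnected)
    {g g' : ℝ → ℝ} {c : ℝ} (hg : ∀ x ∈ s, HasDerivWithinAt g (g' x) s x) (hc₀ : 0 < c)
    (hc : ∀ x ∈ s, c ≤ g' x) (ε : ℝ) :
    volume {x ∈ s | |g x| ≤ ε} ≤ ENNReal.ofReal (2 * ε / c) := by
  have hdist : ∀ x ∈ {x ∈ s | |g x| ≤ ε}, ∀ y ∈ {x ∈ s | |g x| ≤ ε}, x ≤ y →
      y - x ≤ 2 * ε / c :=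
    fun x ⟨hx, hgx⟩ y ⟨hy, hgy⟩ hxy => by
      rw [le_div_iff₀ hc₀]
      have := hs.mul_sub_le_sub_of_le_hasDerivWithinAt hg hc hx hy hxy
      linarith [abs_le.1 hgx, abs_le.1 hgy]
  refine (Real.volume_le_diam _).trans (Metric.ediam_le fun x hx y hy => ?_)
  rw [edist_dist, Real.dist_eq]
  refine ENNReal.ofReal_le_ofReal ?_
  rcases le_total x y with hxy | hyx
  · rw [abs_sub_comm, abs_of_nonneg (sub_nonneg.2 hxy)]
    exact hdist x hx y hy hxy
  · rw [abs_of_nonneg (sub_nonneg.2 hyx)]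
    exact hdist y hy x hx hyx

theorem IsPreconnected.exists_abs_eq_one_le_mul {s : Set ℝ} (hs : IsPreconnected s) {h : ℝ → ℝ}
    (hh : ContinuousOn h s) {c : ℝ} (hc₀ : 0 < c) (hc : ∀ x ∈ s, c ≤ |h x|) :
    ∃ σ : ℝ, |σ| = 1 ∧ ∀ x ∈ s, c ≤ σ * h x := by
  rcases hs.eq_or_eq_neg_of_sq_eq hh hh.abs (fun x _ => (sq_abs (h x)).symm)
    (fun hx => (hc₀.trans_le (hc _ hx)).ne') with heq | heq
  · exact ⟨1, abs_one, fun x hx => by rw [one_mul, heq hx]; exact hc x hx⟩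
  · refine ⟨-1, by norm_num, fun x hx => ?_⟩
    rw [heq hx]
    simpa using hc x hx

theorem Set.OrdConnected.volume_sublevel_le_of_le_derivChain {k : ℕ} (hk : 1 ≤ k)
    {s : Set ℝ} (hs : s.OrdConnected) {g : ℕ → ℝ → ℝ}
    (hg : ∀ i < k, ∀ x ∈ s, HasDerivWithinAt (g i) (g (i + 1) x) s x) {c t : ℝ} (hc : 0 < c)
    (ht : 0 < t) (hgk : ∀ x ∈ s, c ≤ g k x) :
    volume {x ∈ s | |g 0 x| ≤ c * t ^ k} ≤ ENNReal.ofReal (6 ^ k * t) := by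
  induction k, hk using Nat.le_induction generalizing s g c with
  | base =>
    refine (hs.volume_sublevel_le_of_le_deriv (hg 0 one_pos) hc hgk _).trans
      (ENNReal.ofReal_le_ofReal ?_)
    rw [pow_one, show 2 * (c * t) / c = 2 * t by field_simp]
    linarith
  | succ k hk ih =>
    have hgk' : ∀ x ∈ s, HasDerivWithinAt (g k) (g (k + 1) x) s x := hg k k.lt_succ_self
    have hmono : MonotoneOn (g k) s := fun x hx y hy hxy => by
      have := hs.mul_sub_le_sub_of_le_hasDerivWithinAt hgk' hgk hx hy hxy
      nlinarith
    have hpiece : ∀ {T : Set ℝ}, T.OrdConnected → ∀ σ : ℝ, |σ| = 1 →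
        (∀ x ∈ s, g k x ∈ T → c * t ≤ σ * g k x) →
        volume {x ∈ {x ∈ s | g k x ∈ T} | |g 0 x| ≤ c * t * t ^ k} ≤
          ENNReal.ofReal (6 ^ k * t) := by
      intro T hT σ hσ hσg
      have hsub : {x ∈ s | g k x ∈ T} ⊆ s := fun x hx => hx.1
      have := ih (hs.sep_mem_of_monotoneOn hmono hT) (g := fun i x => σ * g i x)
        (fun i hi x hx => ((hg i (hi.trans k.lt_succ_self) x hx.1).mono hsub).const_mul σ)
        (mul_pos hc ht) (fun x hx => hσg x hx.1 hx.2)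
      simpa only [abs_mul, hσ, one_mul] using this
    have hcover : {x ∈ s | |g 0 x| ≤ c * t ^ (k + 1)} ⊆
        {x ∈ {x ∈ s | g k x ∈ Iio (-(c * t))} | |g 0 x| ≤ c * t * t ^ k} ∪
          {x ∈ s | |g k x| ≤ c * t} ∪
          {x ∈ {x ∈ s | g k x ∈ Ioi (c * t)} | |g 0 x| ≤ c * t * t ^ k} := by
      rintro x ⟨hx, hgx⟩
      rw [pow_succ, mul_comm (t ^ k), ← mul_assoc] at hgx
      rcases lt_or_ge (g k x) (-(c * t)) with hlt | hge
      · exact Or.inl (Or.inl ⟨⟨hx, hlt⟩, hgx⟩)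
      rcases le_or_gt (g k x) (c * t) with hle | hgt
      · exact Or.inl (Or.inr ⟨hx, abs_le.2 ⟨hge, hle⟩⟩)
      · exact Or.inr ⟨⟨hx, hgt⟩, hgx⟩
    calc volume {x ∈ s | |g 0 x| ≤ c * t ^ (k + 1)}
        ≤ ENNReal.ofReal (6 ^ k * t) + ENNReal.ofReal (2 * (c * t) / c) +
            ENNReal.ofReal (6 ^ k * t) := by
          refine (measure_mono hcover).trans ((measure_union_le _ _).trans ?_)
          gcongr
          · refine (measure_union_le _ _).trans ?_
            gcongr
            · exact hpiece ordConnected_Iio (-1) (by norm_num) fun x _ hx => by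
                simp only [mem_Iio] at hx; linarith
            · exact hs.volume_sublevel_le_of_le_deriv hgk' hc hgk _
          · exact hpiece ordConnected_Ioi 1 abs_one fun x _ hx => by
              simp only [mem_Ioi] at hx; linarith
      _ ≤ ENNReal.ofReal (6 ^ (k + 1) * t) := by
          rw [← ENNReal.ofReal_add (by positivity) (by positivity),
            ← ENNReal.ofReal_add (by positivity) (by positivity)]
          refine ENNReal.ofReal_le_ofReal ?_
          rw [show 2 * (c * t) / c = 2 * t by field_simp, pow_succ]
          nlinarith [one_le_pow₀ (M₀ := ℝ) (n := k) (by norm_num : (1 : ℝ) ≤ 6)]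

theorem Set.OrdConnected.volume_sublevel_le_of_le_abs_derivChain {k : ℕ} (hk : 1 ≤ k)
    {s : Set ℝ} (hs : s.OrdConnected) {g : ℕ → ℝ → ℝ}
    (hg : ∀ i < k, ∀ x ∈ s, HasDerivWithinAt (g i) (g (i + 1) x) s x)
    (hgk_cont : ContinuousOn (g k) s) {c t : ℝ} (hc : 0 < c) (ht : 0 < t)
    (hgk : ∀ x ∈ s, c ≤ |g k x|) :
    volume {x ∈ s | |g 0 x| ≤ c * t ^ k} ≤ ENNReal.ofReal (6 ^ k * t) := by
  obtain ⟨σ, hσ, hσg⟩ := hs.isPreconnected.exists_abs_eq_one_le_mul hgk_cont hc hgk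
  have := hs.volume_sublevel_le_of_le_derivChain hk (g := fun i x => σ * g i x)
    (fun i hi x hx => (hg i hi x hx).const_mul σ) hc ht hσg
  simpa only [abs_mul, hσ, one_mul] using this

theorem ContDiffOn.hasDerivWithinAt_iteratedDerivWithin {f : ℝ → ℝ} {s : Set ℝ}
    {n : WithTop ℕ∞} (hf : ContDiffOn ℝ n f s) (hs : UniqueDiffOn ℝ s) {i : ℕ} (hi : i < n)
    {x : ℝ} (hx : x ∈ s) :
    HasDerivWithinAt (iteratedDerivWithin i f s) (iteratedDerivWithin (i + 1) f s x) s x := by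
  rw [iteratedDerivWithin_succ]
  exact ((hf.differentiableOn_iteratedDerivWithin hi hs) x hx).hasDerivWithinAt

theorem Icc_subset_biUnion_Icc_add_mul (a h : ℝ) (n : ℕ) :
    Icc a (a + (n + 1) * h) ⊆ ⋃ j ∈ Finset.range (n + 1), Icc (a + j * h) (a + (j + 1) * h) := by
  induction n with
  | zero => simp
  | succ n ih =>
    rw [Finset.range_add_one, Finset.set_biUnion_insert, union_comm]
    push_cast
    exact Icc_subset_Icc_union_Icc.trans (union_subset_union ih subset_rfl)

theorem volume_Icc_inter_le_of_forall_Icc (s : Set ℝ) {a b : ℝ} (hab : a ≤ b) {n : ℕ}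
    (hn : n ≠ 0) {B : ENNReal}
    (hB : ∀ u v, Icc u v ⊆ Icc a b → v - u = (b - a) / n → volume (Icc u v ∩ s) ≤ B) :
    volume (Icc a b ∩ s) ≤ n * B := by
  obtain ⟨m, rfl⟩ := Nat.exists_eq_succ_of_ne_zero hn
  set h := (b - a) / (m + 1 : ℕ)
  have hh : 0 ≤ h := div_nonneg (sub_nonneg.2 hab) (Nat.cast_nonneg _)
  have hb : a + (m + 1) * h = b := by
    simp only [h]; push_cast; field_simp; ring
  have hcover :
      Icc a b ∩ s ⊆ ⋃ j ∈ Finset.range (m + 1), Icc (a + j * h) (a + (j + 1) * h) ∩ s := by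
    rw [← iUnion₂_inter]
    exact inter_subset_inter_left s (hb ▸ Icc_subset_biUnion_Icc_add_mul a h m)
  calc volume (Icc a b ∩ s)
      ≤ ∑ j ∈ Finset.range (m + 1), volume (Icc (a + j * h) (a + (j + 1) * h) ∩ s) :=
        (measure_mono hcover).trans (measure_biUnion_finset_le _ _)
    _ ≤ ∑ _j ∈ Finset.range (m + 1), B := by
        refine Finset.sum_le_sum fun j hj => hB _ _ ?_ (by ring)
        have hj : (j : ℝ) + 1 ≤ m + 1 := by exact_mod_cast Finset.mem_range.1 hj
        refine Icc_subset_Icc (by nlinarith) (hb ▸ ?_)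
        nlinarith
    _ = (m + 1 : ℕ) * B := by rw [Finset.sum_const, Finset.card_range, nsmul_eq_mul]

theorem volume_sublevel_Icc_le_of_le_abs_iteratedDerivWithin {f : ℝ → ℝ} {a b u v τ A θ : ℝ}
    {r : ℕ} (hf : ContDiffOn ℝ (r + 1) f (Icc a b)) (hab : a < b) (huv : u ≤ v)
    (hsub : Icc u v ⊆ Icc a b)
    (hlow : ∃ l : ℕ, 1 ≤ l ∧ l ≤ r ∧ τ ≤ |iteratedDerivWithin l f (Icc a b) u|)
    (hA : ∀ x ∈ Icc a b, ∀ l : ℕ, 1 ≤ l → l ≤ r + 1 →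
      |iteratedDerivWithin l f (Icc a b) x| ≤ A)
    (hlen : A * (v - u) ≤ τ / 2) (hτ₀ : 0 < τ) (hτ₁ : τ ≤ 1) (hθ₀ : 0 < θ) (hθ₁ : θ ≤ 1) :
    volume {x ∈ Icc u v | |f x| ≤ θ ^ r} ≤ ENNReal.ofReal (6 ^ r * (2 * θ / τ)) := by
  obtain ⟨l, hl₁, hlr, hlτ⟩ := hlow
  have hu : u ∈ Icc a b := hsub (left_mem_Icc.2 huv)
  have hderiv : ∀ i ≤ r, ∀ x ∈ Icc a b, HasDerivWithinAt (iteratedDerivWithin i f (Icc a b))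
      (iteratedDerivWithin (i + 1) f (Icc a b) x) (Icc a b) x := fun i hi x hx =>
    hf.hasDerivWithinAt_iteratedDerivWithin (uniqueDiffOn_Icc hab)
      (mod_cast Nat.lt_succ_of_le hi) hx
  have hbound : ∀ x ∈ Icc u v, τ / 2 ≤ |iteratedDerivWithin l f (Icc a b) x| := by
    intro x hx
    have hlip := (convex_Icc a b).norm_image_sub_le_of_norm_hasDerivWithin_le
      (hderiv l hlr) (fun y hy => (hA y hy (l + 1) (by omega) (by omega))) hu (hsub hx)
    rw [Real.norm_eq_abs, Real.norm_eq_abs, abs_of_nonneg (sub_nonneg.2 hx.1)] at hlip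
    have hA₀ : 0 ≤ A := (abs_nonneg _).trans (hA u hu l hl₁ (by omega))
    have := abs_sub_abs_le_abs_sub (iteratedDerivWithin l f (Icc a b) u)
      (iteratedDerivWithin l f (Icc a b) x)
    rw [abs_sub_comm] at this
    nlinarith [hx.2]
  have hsublevel := (ordConnected_Icc (a := u) (b := v)).volume_sublevel_le_of_le_abs_derivChain
    hl₁ (fun i hi x hx => (hderiv i (by omega) x (hsub hx)).mono hsub)
    (fun x hx => (hderiv l hlr x (hsub hx)).continuousWithinAt.mono hsub) (by positivity)
    (by positivity : 0 < 2 * θ / τ) hbound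
  rw [iteratedDerivWithin_zero] at hsublevel
  have hθ_le : θ ≤ 2 * θ / τ := by
    rw [le_div_iff₀ hτ₀]; nlinarith
  have hlevel : θ ^ r ≤ τ / 2 * (2 * θ / τ) ^ l := by
    obtain ⟨m, rfl⟩ := Nat.exists_eq_add_of_le' hl₁
    calc θ ^ r ≤ θ ^ (m + 1) := pow_le_pow_of_le_one hθ₀.le hθ₁ hlr
      _ = θ ^ m * θ := pow_succ θ m
      _ ≤ (2 * θ / τ) ^ m * θ := by gcongr
      _ = τ / 2 * (2 * θ / τ) ^ (m + 1) := by rw [pow_succ]; field_simp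
  calc volume {x ∈ Icc u v | |f x| ≤ θ ^ r}
      ≤ volume {x ∈ Icc u v | |f x| ≤ τ / 2 * (2 * θ / τ) ^ l} :=
        measure_mono fun x hx => ⟨hx.1, hx.2.trans hlevel⟩
    _ ≤ ENNReal.ofReal (6 ^ l * (2 * θ / τ)) := hsublevel
    _ ≤ ENNReal.ofReal (6 ^ r * (2 * θ / τ)) := by
        gcongr
        norm_num

theorem stmt6_general (r : ℕ) :
    ∃ C : ℝ, 0 < C ∧
      ∀ (a b : ℝ), 1 ≤ b - a →
      ∀ f : ℝ → ℝ, ContDiffOn ℝ (r + 1) f (Set.Icc a b) →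
      ∀ τ ∈ Set.Ioo (0:ℝ) 1,
        (∀ x ∈ Set.Icc a b, ∃ l : ℕ, 1 ≤ l ∧ l ≤ r ∧
          τ ≤ |iteratedDerivWithin l f (Set.Icc a b) x|) →
      ∀ A : ℝ,
        (∀ x ∈ Set.Icc a b, ∀ l : ℕ, 1 ≤ l → l ≤ r + 1 →
          |iteratedDerivWithin l f (Set.Icc a b) x| ≤ A) →
      ∀ η ∈ Set.Ioo (0:ℝ) 1,
        volume {x ∈ Set.Icc a b | |f x| ≤ η} ≤
          ENNReal.ofReal (C * A * (b - a) * η ^ (1 / (r : ℝ)) / τ ^ 2) := by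
  refine ⟨6 ^ (r + 1), by positivity, ?_⟩
  rintro a b hab f hf τ ⟨hτ₀, hτ₁⟩ hlow A hA η ⟨hη₀, hη₁⟩
  have ha : a ∈ Icc a b := left_mem_Icc.2 (by linarith)
  obtain ⟨l, hl₁, hlr, hlτ⟩ := hlow a ha
  have hτA : τ ≤ A := hlτ.trans (hA a ha l hl₁ (by omega))
  have hA₀ : 0 < A := hτ₀.trans_le hτA
  set θ := η ^ (1 / (r : ℝ))
  have hθr : θ ^ r = η := by
    rw [← rpow_natCast, ← rpow_mul hη₀.le, one_div_mul_cancel (by norm_cast; omega), rpow_one]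
  have hθ₀ : 0 < θ := by positivity
  have hθ₁ : θ ≤ 1 := rpow_le_one hη₀.le hη₁.le (by positivity)
  set n := ⌈2 * A * (b - a) / τ⌉₊
  have hn_ge : 2 * A * (b - a) / τ ≤ n := Nat.le_ceil _
  have hn_le : (n : ℝ) ≤ 3 * A * (b - a) / τ := by
    have : 1 ≤ A * (b - a) / τ := by rw [le_div_iff₀ hτ₀]; nlinarith
    have hceil : (n : ℝ) < 2 * A * (b - a) / τ + 1 := Nat.ceil_lt_add_one (by positivity)
    linarith [show 3 * A * (b - a) / τ = 2 * A * (b - a) / τ + A * (b - a) / τ by ring]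
  have hn : n ≠ 0 := (Nat.ceil_pos.2 (by positivity)).ne'
  have hlen : A * ((b - a) / n) ≤ τ / 2 := by
    rw [div_le_iff₀ hτ₀] at hn_ge
    rw [mul_div_assoc', div_le_iff₀ (by positivity)]
    linarith
  calc volume {x ∈ Icc a b | |f x| ≤ η}
      ≤ n * ENNReal.ofReal (6 ^ r * (2 * θ / τ)) := by
        refine volume_Icc_inter_le_of_forall_Icc {x | |f x| ≤ η} (by linarith) hn
          fun u v hsub hvu => ?_
        have huv : u ≤ v := by rw [← sub_nonneg, hvu]; positivity
        rw [← hθr]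
        exact volume_sublevel_Icc_le_of_le_abs_iteratedDerivWithin hf (by linarith) huv hsub
          (hlow u (hsub (left_mem_Icc.2 huv))) hA (hvu ▸ hlen) hτ₀ hτ₁.le hθ₀ hθ₁
    _ = ENNReal.ofReal (n * (6 ^ r * (2 * θ / τ))) := by
        rw [ENNReal.ofReal_mul (Nat.cast_nonneg n), ENNReal.ofReal_natCast]
    _ ≤ ENNReal.ofReal (6 ^ (r + 1) * A * (b - a) * θ / τ ^ 2) := by
        refine ENNReal.ofReal_le_ofReal ((mul_le_mul_of_nonneg_right hn_le (by positivity)).trans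
          (le_of_eq ?_))
        field_simp
        ring

theorem stmt6 (r : ℕ) (hr : 1 ≤ r) :
    ∃ C : ℝ, 0 < C ∧
      ∀ (a b : ℝ), 1 ≤ b - a →
      ∀ f : ℝ → ℝ, ContDiffOn ℝ (r + 1) f (Set.Icc a b) →
      ∀ τ ∈ Set.Ioo (0:ℝ) 1,
        (∀ x ∈ Set.Icc a b, ∃ l : ℕ, 1 ≤ l ∧ l ≤ r ∧
          τ ≤ |iteratedDerivWithin l f (Set.Icc a b) x|) →
      ∀ A : ℝ,
        (∀ x ∈ Set.Icc a b, ∀ l : ℕ, 1 ≤ l → l ≤ r + 1 →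
          |iteratedDerivWithin l f (Set.Icc a b) x| ≤ A) →
      ∀ η ∈ Set.Ioo (0:ℝ) 1,
        volume {x ∈ Set.Icc a b | |f x| ≤ η} ≤
          ENNReal.ofReal (C * A * (b - a) * η ^ (1 / (r : ℝ)) / τ ^ 2) :=
  stmt6_general r
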